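/- Let Ω ⊆ ℝ³ be an open set, v ∈ C_{c,σ}^∞(Ω), let m ≤ M be real constants, and let ρ be C¹ on Ω with m ≤ ρ(x) ≤ M for all x ∈ Ω. Then −∑_{i,j=1}^3 ∫_Ω (∂_{x_j}ρ) v_i (∂_{x_i}v_j) dx = ∑_{i,j=1}^3 ∫_Ω ρ (∂_{x_j}v_i)(∂_{x_i}v_j) dx, and |∑_{i,j=1}^3 ∫_Ω (∂_{x_j}ρ) v_i (∂_{x_i}v_j) dx| ≤ ((M − m)/2) ∑_{i,j=1}^3 ∫_Ω (∂_{x_j}v_i)² dx. -/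

import Mathlib

open MeasureTheory Filter

noncomputable section

abbrev E3 := EuclideanSpace ℝ (Fin 3)

/-- The partial derivative `∂f/∂xᵢ`. -/
noncomputable def pd (i : Fin 3) (f : E3 → ℝ) (x : E3) : ℝ :=
  fderiv ℝ f x (EuclideanSpace.single i 1)

/-- The Laplacian `Δf = ∑ ∂²f/∂xᵢ²`. -/
noncomputable def lap (f : E3 → ℝ) (x : E3) : ℝ :=
  ∑ i : Fin 3, pd i (pd i f) x

/-- `φ ∈ C_c^∞(Ω)`. -/
def TestFun (Ω : Set E3) (φ : E3 → ℝ) : Prop :=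
  ContDiff ℝ (⊤ : ℕ∞) φ ∧ HasCompactSupport φ ∧ tsupport φ ⊆ Ω

/-- `v ∈ C_{c,σ}^∞(Ω)`: smooth compactly supported divergence-free vector fields on `Ω`. -/
def TestVF (Ω : Set E3) (v : Fin 3 → E3 → ℝ) : Prop :=
  (∀ i, TestFun Ω (v i)) ∧ ∀ x ∈ Ω, ∑ i : Fin 3, pd i (v i) x = 0

/-- The weak Neumann boundary condition `∇ρ·ν = 0` on `∂Ω`:
`∫_Ω (Δρ) w = −∫_Ω ∇ρ·∇w` for every bounded locally Lipschitz `w`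
with essentially bounded gradient. -/
def WeakNeumann (Ω : Set E3) (ρ : E3 → ℝ) : Prop :=
  ∀ w : E3 → ℝ, LocallyLipschitz w →
    (∃ C, ∀ x ∈ Ω, |w x| ≤ C) →
    (∃ C, ∀ x ∈ Ω, ‖fderiv ℝ w x‖ ≤ C) →
    (∫ x in Ω, lap ρ x * w x) = -∫ x in Ω, ∑ i : Fin 3, pd i ρ x * pd i w x

/-- `ρ` is C² on `Ω` with `ρ` and its partial derivatives up to order 2
extending continuously to the closure of `Ω`. -/
def C2ext (Ω : Set E3) (ρ : E3 → ℝ) : Prop :=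
  ContDiffOn ℝ 2 ρ Ω ∧ ContinuousOn ρ (closure Ω) ∧
  (∀ i, ContinuousOn (pd i ρ) (closure Ω)) ∧
  (∀ i j, ContinuousOn (pd i (pd j ρ)) (closure Ω))

/-- `ρ` is C¹ on `Ω` with `ρ` and its first partial derivatives
extending continuously to the closure of `Ω`. -/
def C1ext (Ω : Set E3) (ρ : E3 → ℝ) : Prop :=
  ContDiffOn ℝ 1 ρ Ω ∧ ContinuousOn ρ (closure Ω) ∧
  (∀ i, ContinuousOn (pd i ρ) (closure Ω))


open Topology Set

private lemma pd_congr' {f g : E3 → ℝ} {x : E3} (h : f =ᶠ[nhds x] g) (j : Fin 3) :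
    pd j f x = pd j g x := by rw [pd, pd, h.fderiv_eq]

private lemma pd_zero_of_nmem {f : E3 → ℝ} {x : E3} (hx : x ∉ tsupport f) (j : Fin 3) :
    pd j f x = 0 := by
  have h : f =ᶠ[nhds x] (fun _ => (0:ℝ)) := by
    filter_upwards [(isClosed_tsupport f).isOpen_compl.mem_nhds hx] with y hy
    exact image_eq_zero_of_notMem_tsupport hy
  rw [pd_congr' h]; simp [pd]

private lemma contDiff_pd {f : E3 → ℝ} (hf : ContDiff ℝ (⊤ : ℕ∞) f) (i : Fin 3) :
    ContDiff ℝ (⊤ : ℕ∞) (pd i f) :=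
  (hf.fderiv_right (le_refl _)).clm_apply contDiff_const

private lemma continuous_pd {f : E3 → ℝ} (hf : ContDiff ℝ 1 f) (i : Fin 3) :
    Continuous (pd i f) :=
  (hf.continuous_fderiv one_ne_zero).clm_apply continuous_const

private lemma hcs_pd {f : E3 → ℝ} (hf : HasCompactSupport f) (i : Fin 3) :
    HasCompactSupport (pd i f) :=
  (hf.fderiv ℝ).comp_left (g := fun L : E3 →L[ℝ] ℝ => L (EuclideanSpace.single i 1)) rfl

private lemma pd_mul {f g : E3 → ℝ} (hf : Differentiable ℝ f) (hg : Differentiable ℝ g)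
    (j : Fin 3) (x : E3) :
    pd j (fun y => f y * g y) x = pd j f x * g x + f x * pd j g x := by
  simp only [pd]
  rw [fderiv_fun_mul (hf x) (hg x)]
  simp; ring

private lemma pd_sum {f : Fin 3 → E3 → ℝ} (hf : ∀ i, Differentiable ℝ (f i)) (j : Fin 3)
    (x : E3) :
    pd j (fun y => ∑ i, f i y) x = ∑ i, pd j (f i) x := by
  simp only [pd]
  rw [fderiv_fun_sum (fun i _ => (hf i x))]
  simp

private lemma pd_comm {f : E3 → ℝ} (hf : ContDiff ℝ (⊤ : ℕ∞) f) (i j : Fin 3) (x : E3) :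
    pd j (pd i f) x = pd i (pd j f) x := by
  have hdf : ∀ y, HasFDerivAt f (fderiv ℝ f y) y := fun y =>
    (hf.differentiable (by simp) y).hasFDerivAt
  have hd2 : Differentiable ℝ (fderiv ℝ f) := (hf.fderiv_right (m := (⊤ : ℕ∞)) (le_refl _)).differentiable (by simp)
  have hdf2 : HasFDerivAt (fderiv ℝ f) (fderiv ℝ (fderiv ℝ f) x) x := (hd2 x).hasFDerivAt
  have key := second_derivative_symmetric hdf hdf2 (EuclideanSpace.single i 1)
      (EuclideanSpace.single j 1)
  have h1 : ∀ (k l : Fin 3), pd l (pd k f) x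
      = fderiv ℝ (fderiv ℝ f) x (EuclideanSpace.single l 1) (EuclideanSpace.single k 1) := by
    intro k l
    have hrfl : pd k f = fun y => fderiv ℝ f y (EuclideanSpace.single k 1) := rfl
    simp only [pd, hrfl]
    rw [fderiv_clm_apply (hd2 x) (differentiableAt_const _)]
    simp
  rw [h1, h1]
  exact key.symm

private lemma ibp {f g : E3 → ℝ} (hf : ContDiff ℝ 1 f) (hg : ContDiff ℝ (⊤ : ℕ∞) g)
    (hgc : HasCompactSupport g) (j : Fin 3) :
    ∫ x, f x * pd j g x = - ∫ x, pd j f x * g x := by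
  have hg1 : ContDiff ℝ 1 g := hg.of_le (by simp)
  simp only [pd]
  apply integral_mul_fderiv_eq_neg_fderiv_mul_of_integrable
  · exact ((continuous_pd hf j).mul hg1.continuous).integrable_of_hasCompactSupport hgc.mul_left
  · exact (hf.continuous.mul (continuous_pd hg1 j)).integrable_of_hasCompactSupport
      (hcs_pd hgc j).mul_left
  · exact (hf.continuous.mul hg1.continuous).integrable_of_hasCompactSupport hgc.mul_left
  · exact fun x _ => hf.differentiable one_ne_zero x
  · exact fun x _ => hg1.differentiable one_ne_zero x

/-- The estimate of the θ-nonlinearity (Chapter 3, Section 4 of [AKM]):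
`−∑_{i,j}∫(∂_jρ)v_i(∂_iv_j) = ∑_{i,j}∫ρ(∂_jv_i)(∂_iv_j)`, and the bound by
`((M−m)/2)‖∇v‖²` when `m ≤ ρ ≤ M`. -/
theorem statement11 (Ω : Set E3) (hΩo : IsOpen Ω)
    (v : Fin 3 → E3 → ℝ) (hv : TestVF Ω v)
    (m M : ℝ) (hmM : m ≤ M)
    (ρ : E3 → ℝ) (hρ : ContDiffOn ℝ 1 ρ Ω)
    (hρbd : ∀ x ∈ Ω, m ≤ ρ x ∧ ρ x ≤ M) :
    (-(∑ i : Fin 3, ∑ j : Fin 3, ∫ x in Ω, pd j ρ x * v i x * pd i (v j) x)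
      = ∑ i : Fin 3, ∑ j : Fin 3, ∫ x in Ω, ρ x * pd j (v i) x * pd i (v j) x) ∧
    |∑ i : Fin 3, ∑ j : Fin 3, ∫ x in Ω, pd j ρ x * v i x * pd i (v j) x|
      ≤ ((M - m)/2) * ∑ i : Fin 3, ∑ j : Fin 3, ∫ x in Ω, (pd j (v i) x)^2 := by
  classical
  obtain ⟨hv1, hv2⟩ := hv
  have hvs : ∀ i, ContDiff ℝ (⊤ : ℕ∞) (v i) := fun i => (hv1 i).1
  have hvc : ∀ i, HasCompactSupport (v i) := fun i => (hv1 i).2.1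
  have hvΩ : ∀ i, tsupport (v i) ⊆ Ω := fun i => (hv1 i).2.2
  set K : Set E3 := ⋃ i, tsupport (v i) with hKdef
  have hK : IsCompact K := isCompact_iUnion fun i => hvc i
  have hKΩ : K ⊆ Ω := Set.iUnion_subset fun i => hvΩ i
  obtain ⟨L, hLc, hKL, hLΩ⟩ := exists_compact_between hK hΩo hKΩ
  obtain ⟨L', hL'c, hLL', hL'Ω⟩ := exists_compact_between hLc hΩo hLΩ
  obtain ⟨χ₀, hχ₀0, hχ₀1, hχ₀01⟩ :=
    exists_contMDiffMap_zero_one_of_isClosed (n := (⊤ : ℕ∞)) (modelWithCornersSelf ℝ E3)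
      (isOpen_interior (s := L')).isClosed_compl
      hLc.isClosed ((disjoint_compl_left (a := interior L')).mono_right hLL')
  set χ : E3 → ℝ := ⇑χ₀ with hχdef
  have hχ : ContDiff ℝ 1 χ :=
    (contMDiff_iff_contDiff.mp χ₀.contMDiff).of_le (by exact_mod_cast le_top)
  have hχΩ : tsupport χ ⊆ Ω := by
    refine subset_trans (closure_minimal ?_ hL'c.isClosed) hL'Ω
    intro x hx
    by_contra h
    exact hx (hχ₀0 (fun h' : x ∈ interior L' => h (interior_subset h')))
  have hχ1 : ∀ x ∈ interior L, χ x = 1 := fun x hx => hχ₀1 (interior_subset hx)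
  set σ : E3 → ℝ := fun x => χ x * ρ x with hσdef
  have hσ : ContDiff ℝ 1 σ := by
    rw [contDiff_iff_contDiffAt]
    intro x
    by_cases hx : x ∈ Ω
    · exact (hχ.contDiffAt).mul (hρ.contDiffAt (hΩo.mem_nhds hx))
    · have hx' : x ∉ tsupport χ := fun h => hx (hχΩ h)
      have hev : σ =ᶠ[nhds x] (fun _ => (0:ℝ)) := by
        filter_upwards [(isClosed_tsupport χ).isOpen_compl.mem_nhds hx'] with y hy
        simp [hσdef, image_eq_zero_of_notMem_tsupport hy]
      exact (contDiffAt_const (c := (0:ℝ))).congr_of_eventuallyEq hev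
  have hσρ : ∀ x ∈ interior L, σ x = ρ x := fun x hx => by
    simp [hσdef, hχ1 x hx]
  have hpdσρ : ∀ (j : Fin 3), ∀ x ∈ interior L, pd j σ x = pd j ρ x := by
    intro j x hx
    have hev : σ =ᶠ[nhds x] ρ := by
      filter_upwards [isOpen_interior.mem_nhds hx] with y hy using hσρ y hy
    rw [pd, pd, hev.fderiv_eq]
  -- integrability toolkit
  have int0 : ∀ {f : E3 → ℝ}, Continuous f → HasCompactSupport f → Integrable f :=
    fun hf hc => hf.integrable_of_hasCompactSupport hc
  have cσ : Continuous σ := hσ.continuous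
  have cv : ∀ i, Continuous (v i) := fun i => (hvs i).continuous
  have cpdv : ∀ i j, Continuous (pd j (v i)) :=
    fun i j => continuous_pd ((hvs i).of_le (by simp)) j
  have cpdpd : ∀ j i k, Continuous (pd k (pd i (v j))) :=
    fun j i k => continuous_pd ((contDiff_pd (hvs j) i).of_le (by simp)) k
  have spdv : ∀ i j, HasCompactSupport (pd j (v i)) := fun i j => hcs_pd (hvc i) j
  have intσPQ : ∀ i j, Integrable (fun x => σ x * (pd j (v i) x * pd i (v j) x)) :=
    fun i j => int0 (cσ.mul ((cpdv i j).mul (cpdv j i))) ((spdv i j).mul_right.mul_left)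
  have intσvPD2 : ∀ i j, Integrable (fun x => σ x * (v i x * pd j (pd i (v j)) x)) :=
    fun i j => int0 (cσ.mul ((cv i).mul (cpdpd j i j))) ((hvc i).mul_right.mul_left)
  have intPQ : ∀ i j, Integrable (fun x => pd j (v i) x * pd i (v j) x) :=
    fun i j => int0 ((cpdv i j).mul (cpdv j i)) (spdv i j).mul_right
  have intPD2v : ∀ i j, Integrable (fun x => pd j (pd i (v j)) x * v i x) :=
    fun i j => int0 ((cpdpd j i j).mul (cv i)) (hvc i).mul_left
  have intP2 : ∀ i j, Integrable (fun x => (pd j (v i) x)^2) :=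
    fun i j => int0 ((cpdv i j).pow 2)
      ((spdv i j).comp_left (g := fun y : ℝ => y^2) (by norm_num))
  -- key integration by parts identity
  have key : ∀ i j, (∫ x, pd j σ x * (v i x * pd i (v j) x))
      = - (∫ x, σ x * (pd j (v i) x * pd i (v j) x))
        - ∫ x, σ x * (v i x * pd j (pd i (v j)) x) := by
    intro i j
    have hgs : ContDiff ℝ (⊤ : ℕ∞) (fun y => v i y * pd i (v j) y) :=
      (hvs i).mul (contDiff_pd (hvs j) i)
    have hgc : HasCompactSupport (fun y => v i y * pd i (v j) y) := (hvc i).mul_right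
    have h1 := ibp hσ hgs hgc j
    beta_reduce at h1
    have hpd : ∀ x : E3, pd j (fun y => v i y * pd i (v j) y) x
        = pd j (v i) x * pd i (v j) x + v i x * pd j (pd i (v j)) x :=
      fun x => pd_mul ((hvs i).differentiable (by simp))
        ((contDiff_pd (hvs j) i).differentiable (by simp)) j x
    have h2 : (∫ x, σ x * pd j (fun y => v i y * pd i (v j) y) x)
        = (∫ x, σ x * (pd j (v i) x * pd i (v j) x))
          + ∫ x, σ x * (v i x * pd j (pd i (v j)) x) := by
      rw [← integral_add (intσPQ i j) (intσvPD2 i j)]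
      congr 1; funext x; rw [hpd x]; ring
    rw [h2] at h1
    linarith [h1]
  -- the divergence-free structure kills the second terms
  have hdiv : ∀ (i : Fin 3) (x : E3), v i x * (∑ j : Fin 3, pd j (pd i (v j)) x) = 0 := by
    intro i x
    by_cases hx : x ∈ Ω
    · have hsum : (∑ j : Fin 3, pd j (pd i (v j)) x) = 0 := by
        calc (∑ j : Fin 3, pd j (pd i (v j)) x)
            = ∑ j : Fin 3, pd i (pd j (v j)) x :=
              Finset.sum_congr rfl fun j _ => pd_comm (hvs j) i j x
          _ = pd i (fun y => ∑ j : Fin 3, pd j (v j) y) x :=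
              (pd_sum (fun j => (contDiff_pd (hvs j) j).differentiable (by simp)) i x).symm
          _ = 0 := by
              have hev : (fun y => ∑ j : Fin 3, pd j (v j) y) =ᶠ[nhds x] (fun _ => (0:ℝ)) := by
                filter_upwards [hΩo.mem_nhds hx] with y hy using hv2 y hy
              rw [pd_congr' hev]; simp [pd]
      rw [hsum, mul_zero]
    · rw [image_eq_zero_of_notMem_tsupport (fun h => hx (hvΩ i h)), zero_mul]
  have hzero : ∀ i : Fin 3, (∑ j : Fin 3, ∫ x, σ x * (v i x * pd j (pd i (v j)) x)) = 0 := by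
    intro i
    rw [← integral_finset_sum _ (fun j _ => intσvPD2 i j)]
    have hpt : ∀ x : E3, (∑ j : Fin 3, σ x * (v i x * pd j (pd i (v j)) x)) = 0 := by
      intro x
      calc (∑ j : Fin 3, σ x * (v i x * pd j (pd i (v j)) x))
          = σ x * (v i x * ∑ j : Fin 3, pd j (pd i (v j)) x) := by
            rw [Finset.mul_sum, Finset.mul_sum]
        _ = 0 := by rw [hdiv i x, mul_zero]
    simp only [hpt, integral_zero]
  have hzero2 : ∀ i : Fin 3, (∑ j : Fin 3, ∫ x, pd j (pd i (v j)) x * v i x) = 0 := by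
    intro i
    rw [← integral_finset_sum _ (fun j _ => intPD2v i j)]
    have hpt : ∀ x : E3, (∑ j : Fin 3, pd j (pd i (v j)) x * v i x) = 0 := by
      intro x
      rw [← Finset.sum_mul, mul_comm]
      exact hdiv i x
    simp only [hpt, integral_zero]
  have claim3 : (∑ i : Fin 3, ∑ j : Fin 3, ∫ x, pd j (v i) x * pd i (v j) x) = 0 := by
    have hij : ∀ i j, (∫ x, pd j (v i) x * pd i (v j) x)
        = - ∫ x, pd j (pd i (v j)) x * v i x := by
      intro i j
      have h := ibp ((contDiff_pd (hvs j) i).of_le (by simp)) (hvs i) (hvc i) j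
      rw [← h]
      congr 1; funext x; ring
    calc (∑ i : Fin 3, ∑ j : Fin 3, ∫ x, pd j (v i) x * pd i (v j) x)
        = ∑ i : Fin 3, ∑ j : Fin 3, -(∫ x, pd j (pd i (v j)) x * v i x) :=
          Finset.sum_congr rfl fun i _ => Finset.sum_congr rfl fun j _ => hij i j
      _ = ∑ i : Fin 3, -(∑ j : Fin 3, (∫ x, pd j (pd i (v j)) x * v i x)) := by
          simp
      _ = 0 := by simp [hzero2]
  have main : ∀ i : Fin 3, (∑ j : Fin 3, ∫ x, pd j σ x * (v i x * pd i (v j) x))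
      = - ∑ j : Fin 3, ∫ x, σ x * (pd j (v i) x * pd i (v j) x) := by
    intro i
    have h1 : (∑ j : Fin 3, ∫ x, pd j σ x * (v i x * pd i (v j) x))
        = (∑ j : Fin 3, (-(∫ x, σ x * (pd j (v i) x * pd i (v j) x))
            - ∫ x, σ x * (v i x * pd j (pd i (v j)) x))) :=
      Finset.sum_congr rfl fun j _ => key i j
    rw [h1, Finset.sum_sub_distrib, hzero i, sub_zero, Finset.sum_neg_distrib]
  -- relating set integrals to global ones
  have hAglob : ∀ i j, (∫ x in Ω, pd j ρ x * v i x * pd i (v j) x)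
      = ∫ x, pd j σ x * (v i x * pd i (v j) x) := by
    intro i j
    have heq : (fun x => pd j ρ x * v i x * pd i (v j) x)
        = fun x => pd j σ x * (v i x * pd i (v j) x) := by
      funext x
      by_cases hx : x ∈ tsupport (v i)
      · rw [← hpdσρ j x (hKL (Set.mem_iUnion.2 ⟨i, hx⟩)), mul_assoc]
      · simp [image_eq_zero_of_notMem_tsupport hx]
    rw [heq]
    exact setIntegral_eq_integral_of_forall_compl_eq_zero fun x hx => by
      simp [image_eq_zero_of_notMem_tsupport (fun h : x ∈ tsupport (v i) => hx (hvΩ i h))]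
  have hBglob : ∀ i j, (∫ x in Ω, ρ x * pd j (v i) x * pd i (v j) x)
      = ∫ x, σ x * (pd j (v i) x * pd i (v j) x) := by
    intro i j
    have heq : (fun x => ρ x * pd j (v i) x * pd i (v j) x)
        = fun x => σ x * (pd j (v i) x * pd i (v j) x) := by
      funext x
      by_cases hx : x ∈ tsupport (v i)
      · rw [← hσρ x (hKL (Set.mem_iUnion.2 ⟨i, hx⟩)), mul_assoc]
      · simp [pd_zero_of_nmem hx j]
    rw [heq]
    exact setIntegral_eq_integral_of_forall_compl_eq_zero fun x hx => by
      simp [pd_zero_of_nmem (fun h : x ∈ tsupport (v i) => hx (hvΩ i h)) j]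
  have hS : (∑ i : Fin 3, ∑ j : Fin 3, ∫ x in Ω, pd j ρ x * v i x * pd i (v j) x)
      = - ∑ i : Fin 3, ∑ j : Fin 3, ∫ x, σ x * (pd j (v i) x * pd i (v j) x) := by
    calc (∑ i : Fin 3, ∑ j : Fin 3, ∫ x in Ω, pd j ρ x * v i x * pd i (v j) x)
        = ∑ i : Fin 3, ∑ j : Fin 3, ∫ x, pd j σ x * (v i x * pd i (v j) x) :=
          Finset.sum_congr rfl fun i _ => Finset.sum_congr rfl fun j _ => hAglob i j
      _ = ∑ i : Fin 3, -∑ j : Fin 3, ∫ x, σ x * (pd j (v i) x * pd i (v j) x) :=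
          Finset.sum_congr rfl fun i _ => main i
      _ = - ∑ i : Fin 3, ∑ j : Fin 3, ∫ x, σ x * (pd j (v i) x * pd i (v j) x) := by
          simp
  have hident : (∑ i : Fin 3, ∑ j : Fin 3, ∫ x in Ω, pd j ρ x * v i x * pd i (v j) x)
      = - ∑ i : Fin 3, ∑ j : Fin 3, ∫ x in Ω, ρ x * pd j (v i) x * pd i (v j) x := by
    rw [hS]
    congr 1
    exact Finset.sum_congr rfl fun i _ => Finset.sum_congr rfl fun j _ => (hBglob i j).symm
  constructor
  · rw [hident, neg_neg]
  -- the bound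
  set c : ℝ := (m + M) / 2 with hcdef
  set r : ℝ := (M - m) / 2 with hrdef
  have hr : 0 ≤ r := by rw [hrdef]; linarith
  have intRQ : ∀ i j, Integrable (fun x => (σ x - c) * (pd j (v i) x * pd i (v j) x)) :=
    fun i j => int0 ((cσ.sub continuous_const).mul ((cpdv i j).mul (cpdv j i)))
      ((spdv i j).mul_right.mul_left)
  have intBnd : ∀ i j,
      Integrable (fun x => r * ((pd j (v i) x)^2 + (pd i (v j) x)^2) / 2) := by
    intro i j
    refine int0 (((continuous_const.mul (((cpdv i j).pow 2).add ((cpdv j i).pow 2))).div_const 2)) ?_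
    have h1 : HasCompactSupport (fun x => (pd j (v i) x)^2 + (pd i (v j) x)^2) :=
      ((spdv i j).comp_left (g := fun y : ℝ => y^2) (by norm_num)).add
        ((spdv j i).comp_left (g := fun y : ℝ => y^2) (by norm_num))
    exact h1.comp_left (g := fun y : ℝ => r * y / 2) (by simp)
  have hptw : ∀ (i j : Fin 3) (x : E3), |(σ x - c) * (pd j (v i) x * pd i (v j) x)|
      ≤ r * ((pd j (v i) x)^2 + (pd i (v j) x)^2) / 2 := by
    intro i j x
    by_cases hx : x ∈ tsupport (v i)
    · have hxL : x ∈ interior L := hKL (Set.mem_iUnion.2 ⟨i, hx⟩)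
      have hxΩ : x ∈ Ω := hLΩ (interior_subset hxL)
      have h1 : |σ x - c| ≤ r := by
        rw [hσρ x hxL, hcdef, hrdef, abs_le]
        obtain ⟨hm, hM⟩ := hρbd x hxΩ
        constructor <;> linarith
      have h2 : |pd j (v i) x * pd i (v j) x|
          ≤ ((pd j (v i) x)^2 + (pd i (v j) x)^2) / 2 := by
        rw [abs_mul]
        nlinarith [sq_nonneg (|pd j (v i) x| - |pd i (v j) x|), sq_abs (pd j (v i) x),
          sq_abs (pd i (v j) x), abs_nonneg (pd j (v i) x), abs_nonneg (pd i (v j) x)]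
      calc |(σ x - c) * (pd j (v i) x * pd i (v j) x)|
          = |σ x - c| * |pd j (v i) x * pd i (v j) x| := abs_mul _ _
        _ ≤ r * (((pd j (v i) x)^2 + (pd i (v j) x)^2) / 2) :=
            mul_le_mul h1 h2 (abs_nonneg _) hr
        _ = r * ((pd j (v i) x)^2 + (pd i (v j) x)^2) / 2 := by ring
    · have : pd j (v i) x = 0 := pd_zero_of_nmem hx j
      rw [this]
      simp only [zero_mul, mul_zero, abs_zero]
      nlinarith [sq_nonneg (pd i (v j) x), hr]
  have hub : ∀ i j, |∫ x, (σ x - c) * (pd j (v i) x * pd i (v j) x)|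
      ≤ ∫ x, r * ((pd j (v i) x)^2 + (pd i (v j) x)^2) / 2 := by
    intro i j
    calc |∫ x, (σ x - c) * (pd j (v i) x * pd i (v j) x)|
        ≤ ∫ x, |(σ x - c) * (pd j (v i) x * pd i (v j) x)| := by
          simpa only [Real.norm_eq_abs] using
            norm_integral_le_integral_norm (fun x => (σ x - c) * (pd j (v i) x * pd i (v j) x))
      _ ≤ ∫ x, r * ((pd j (v i) x)^2 + (pd i (v j) x)^2) / 2 :=
          integral_mono ((intRQ i j).abs) (intBnd i j) (hptw i j)
  have hsplit : ∀ i j, (∫ x, (σ x - c) * (pd j (v i) x * pd i (v j) x))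
      = (∫ x, σ x * (pd j (v i) x * pd i (v j) x))
        - c * ∫ x, pd j (v i) x * pd i (v j) x := by
    intro i j
    rw [← integral_const_mul, ← integral_sub (intσPQ i j) ((intPQ i j).const_mul c)]
    congr 1; funext x; ring
  have hA : (∑ i : Fin 3, ∑ j : Fin 3, ∫ x in Ω, pd j ρ x * v i x * pd i (v j) x)
      = - ∑ i : Fin 3, ∑ j : Fin 3, ∫ x, (σ x - c) * (pd j (v i) x * pd i (v j) x) := by
    have e2 : (∑ i : Fin 3, ∑ j : Fin 3, ∫ x, (σ x - c) * (pd j (v i) x * pd i (v j) x))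
        = (∑ i : Fin 3, ∑ j : Fin 3, ∫ x, σ x * (pd j (v i) x * pd i (v j) x))
          - c * ∑ i : Fin 3, ∑ j : Fin 3, ∫ x, pd j (v i) x * pd i (v j) x := by
      simp only [hsplit, Finset.sum_sub_distrib, Finset.mul_sum]
    rw [claim3, mul_zero, sub_zero] at e2
    rw [hS, e2]
  have hsplit2 : ∀ i j, (∫ x, r * ((pd j (v i) x)^2 + (pd i (v j) x)^2) / 2)
      = r/2 * (∫ x, (pd j (v i) x)^2) + r/2 * ∫ x, (pd i (v j) x)^2 := by
    intro i j
    rw [← integral_const_mul, ← integral_const_mul,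
      ← integral_add ((intP2 i j).const_mul _) ((intP2 j i).const_mul _)]
    congr 1; funext x; ring
  have hP2glob : ∀ i j, (∫ x in Ω, (pd j (v i) x)^2) = ∫ x, (pd j (v i) x)^2 :=
    fun i j => setIntegral_eq_integral_of_forall_compl_eq_zero fun x hx => by
      simp [pd_zero_of_nmem (fun h : x ∈ tsupport (v i) => hx (hvΩ i h)) j]
  rw [hA, abs_neg]
  calc |∑ i : Fin 3, ∑ j : Fin 3, ∫ x, (σ x - c) * (pd j (v i) x * pd i (v j) x)|
      ≤ ∑ i : Fin 3, ∑ j : Fin 3, |∫ x, (σ x - c) * (pd j (v i) x * pd i (v j) x)| :=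
        (Finset.abs_sum_le_sum_abs _ _).trans
          (Finset.sum_le_sum fun i _ => Finset.abs_sum_le_sum_abs _ _)
    _ ≤ ∑ i : Fin 3, ∑ j : Fin 3, ∫ x, r * ((pd j (v i) x)^2 + (pd i (v j) x)^2) / 2 :=
        Finset.sum_le_sum fun i _ => Finset.sum_le_sum fun j _ => hub i j
    _ = r * ∑ i : Fin 3, ∑ j : Fin 3, ∫ x, (pd j (v i) x)^2 := by
        have swap : (∑ i : Fin 3, ∑ j : Fin 3, (r/2 * ∫ x, (pd i (v j) x)^2))
            = ∑ i : Fin 3, ∑ j : Fin 3, (r/2 * ∫ x, (pd j (v i) x)^2) :=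
          Finset.sum_comm (f := fun i j => r/2 * ∫ x, (pd i (v j) x)^2)
        simp only [hsplit2, Finset.sum_add_distrib]
        rw [swap]
        simp only [← Finset.mul_sum]
        ring
    _ = ((M - m)/2) * ∑ i : Fin 3, ∑ j : Fin 3, ∫ x in Ω, (pd j (v i) x)^2 := by
        rw [hrdef]
        congr 1
        exact Finset.sum_congr rfl fun i _ => Finset.sum_congr rfl fun j _ => (hP2glob i j).symm
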